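/- Define Ξ as the block matrix [[A, L Q Lᵀ], [0, −Aᵀ]] of size 2n×2n. Then exp(Ξ Δt) has block form [[Υ₁₁, Υ₁₂], [0, Υ₂₂]] with Υ₁₁ = exp(A Δt), and Υ₁₂ · Υ₁₁ᵀ = ∫₀^{Δt} exp(A(Δt−s)) · L Q Lᵀ · (exp(A(Δt−s)))ᵀ ds. -/

import Mathlib

/-!
For `Ξ = [[A, B], [0, D]]` put `W t = ∫₀ᵗ exp(-sA) B exp(sD) ds` and
`M t = [[exp(tA), exp(tA) W t], [0, exp(tD)]]`. Then `M' = Ξ M` and `M 0 = 1`, and any such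
solution equals `exp(tΞ)` because `exp(-tΞ) M t` has zero derivative. With `D = -Aᵀ`,
multiplying the upper right block by `exp(tA)ᵀ` on the right moves both exponentials inside `W`,
where they combine to `exp((t - s)A)` and its transpose.
-/

open Matrix NormedSpace

section NormedAlgebra

variable {𝔸 : Type*} [NormedRing 𝔸] [NormedAlgebra ℝ 𝔸] [CompleteSpace 𝔸]

theorem exp_smul_mul_exp_smul (X : 𝔸) (s t : ℝ) :
    exp (s • X) * exp (t • X) = exp ((s + t) • X) := by
  let _ : NormedAlgebra ℚ 𝔸 := NormedAlgebra.restrictScalars ℚ ℝ 𝔸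
  rw [add_smul, exp_add_of_commute (((Commute.refl X).smul_left s).smul_right t)]

theorem mul_intervalIntegral_mul (a c : 𝔸) {f : ℝ → 𝔸} {x y : ℝ}
    (hf : IntervalIntegrable f MeasureTheory.volume x y) :
    a * (∫ s in x..y, f s) * c = ∫ s in x..y, a * f s * c :=
  ((ContinuousLinearMap.mulLeftRight ℝ 𝔸 a c).intervalIntegral_comp_comm hf).symm

theorem continuous_exp_smul (X : 𝔸) : Continuous fun t : ℝ => exp (t • X) :=
  continuous_iff_continuousAt.2 fun t => (hasDerivAt_exp_smul_const X t).continuousAt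

theorem eq_exp_smul_mul_of_hasDerivAt {X : 𝔸} {M : ℝ → 𝔸}
    (hM : ∀ t, HasDerivAt M (X * M t) t) (t : ℝ) : M t = exp (t • X) * M 0 := by
  have hderiv : ∀ t, HasDerivAt (fun t => exp (t • -X) * M t) 0 t := fun t =>
    ((hasDerivAt_exp_smul_const (-X) t).mul (hM t)).congr_deriv <| by
      rw [mul_neg, neg_mul, mul_assoc, neg_add_cancel]
  have hconst : exp (t • -X) * M t = M 0 := by
    simpa using is_const_of_deriv_eq_zero (fun t => (hderiv t).differentiableAt)
      (fun t => (hderiv t).deriv) t 0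
  rw [← hconst, ← mul_assoc, smul_neg, ← neg_smul, exp_smul_mul_exp_smul, add_neg_cancel,
    zero_smul, exp_zero, one_mul]

end NormedAlgebra

section LinftyOp

variable {k : Type*} [Fintype k] [DecidableEq k]

/- The uniformity of Mathlib's `linftyOpNormedRing` agrees with the product uniformity on `Matrix`
only after unfolding, so instance search (e.g. for Bochner integrals) cannot combine the two;
restating it as the canonical uniformity avoids this. -/
@[reducible] noncomputable def Matrix.linftyOpNormedRingOfPi (α : Type*) [NormedRing α] :
    NormedRing (Matrix k k α) :=
  { Matrix.linftyOpNormedRing with toUniformSpace := inferInstance }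

attribute [local instance] Matrix.linftyOpNormedRingOfPi

@[reducible] noncomputable def Matrix.linftyOpNormedAlgebraOfPi (R α : Type*) [NormedField R]
    [NormedRing α] [NormedAlgebra R α] : NormedAlgebra R (Matrix k k α) :=
  { Matrix.linftyOpNormedAlgebra with }

attribute [local instance] Matrix.linftyOpNormedAlgebraOfPi

theorem Matrix.hasDerivAt_fromBlocks
    {a b c d : ℝ → Matrix k k ℝ} {a' b' c' d' : Matrix k k ℝ} {t : ℝ}
    (ha : HasDerivAt a a' t) (hb : HasDerivAt b b' t) (hc : HasDerivAt c c' t)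
    (hd : HasDerivAt d d' t) :
    HasDerivAt (fun t => fromBlocks (a t) (b t) (c t) (d t)) (fromBlocks a' b' c' d') t :=
  let fromBlocksₗ : (Matrix k k ℝ × Matrix k k ℝ × Matrix k k ℝ × Matrix k k ℝ) →ₗ[ℝ]
      Matrix (k ⊕ k) (k ⊕ k) ℝ :=
    { toFun := fun p => fromBlocks p.1 p.2.1 p.2.2.1 p.2.2.2
      map_add' := fun _ _ => (fromBlocks_add ..).symm
      map_smul' := fun _ _ => (fromBlocks_smul ..).symm }
  fromBlocksₗ.toContinuousLinearMap.hasFDerivAt.comp_hasDerivAt t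
    (ha.prodMk (hb.prodMk (hc.prodMk hd)))

theorem Matrix.intervalIntegral_apply {f : ℝ → Matrix k k ℝ}
    {x y : ℝ} (hf : IntervalIntegrable f MeasureTheory.volume x y) (i j : k) :
    (∫ s in x..y, f s) i j = ∫ s in x..y, f s i j :=
  ((entryLinearMap ℝ ℝ i j).toContinuousLinearMap.intervalIntegral_comp_comm hf).symm

theorem Matrix.exp_smul_fromBlocks_zero₂₁ (A B D : Matrix k k ℝ) (t : ℝ) :
    exp (t • fromBlocks A B 0 D) =
      fromBlocks (exp (t • A)) (exp (t • A) * ∫ s in 0..t, exp (-s • A) * B * exp (s • D)) 0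
        (exp (t • D)) := by
  set F : ℝ → Matrix k k ℝ := fun s => exp (-s • A) * B * exp (s • D)
  have hF : Continuous F :=
    (((continuous_exp_smul A).comp continuous_neg).mul continuous_const).mul
      (continuous_exp_smul D)
  have hcancel : ∀ t, exp (t • A) * F t = B * exp (t • D) := fun t => by
    rw [← mul_assoc, ← mul_assoc, exp_smul_mul_exp_smul, add_neg_cancel, zero_smul, exp_zero,
      one_mul]
  set M : ℝ → Matrix (k ⊕ k) (k ⊕ k) ℝ := fun t =>
    fromBlocks (exp (t • A)) (exp (t • A) * ∫ s in 0..t, F s) 0 (exp (t • D))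
  have hM : ∀ t, HasDerivAt M (fromBlocks A B 0 D * M t) t := fun t => by
    have hexpA := hasDerivAt_exp_smul_const' A t
    convert hasDerivAt_fromBlocks hexpA (hexpA.mul (hF.integral_hasStrictDerivAt 0 t).hasDerivAt)
      (hasDerivAt_const t 0) (hasDerivAt_exp_smul_const' D t) using 1
    · rfl
    rw [fromBlocks_multiply, hcancel]
    simp only [Matrix.mul_zero, Matrix.zero_mul, add_zero, zero_add, mul_assoc]
  have hM₀ : M 0 = 1 := by simp [M]
  simpa [hM₀] using (eq_exp_smul_mul_of_hasDerivAt hM t).symm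

theorem Matrix.exp_smul_mul_intervalIntegral_mul_exp_smul_transpose (A B : Matrix k k ℝ) (t : ℝ) :
    exp (t • A) * (∫ s in 0..t, exp (-s • A) * B * exp (s • -Aᵀ)) * (exp (t • A))ᵀ =
      fun i j => ∫ s in 0..t, (exp ((t - s) • A) * B * (exp ((t - s) • A))ᵀ) i j := by
  have hconj : ∀ s : ℝ, exp (t • A) * (exp (-s • A) * B * exp (s • -Aᵀ)) * (exp (t • A))ᵀ =
      exp ((t - s) • A) * B * (exp ((t - s) • A))ᵀ := fun s => by
    rw [smul_neg, ← neg_smul, ← transpose_smul, exp_transpose, sub_eq_add_neg,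
      ← exp_smul_mul_exp_smul, transpose_mul]
    simp only [Matrix.mul_assoc]
  have hcont : Continuous fun s : ℝ => exp (-s • A) * B * exp (s • -Aᵀ) :=
    (((continuous_exp_smul A).comp continuous_neg).mul continuous_const).mul
      (continuous_exp_smul (-Aᵀ))
  rw [mul_intervalIntegral_mul _ _ (hcont.intervalIntegrable 0 t)]
  simp_rw [hconj]
  ext i j
  refine Matrix.intervalIntegral_apply (Continuous.intervalIntegrable ?_ 0 t) i j
  have hexp : Continuous fun s : ℝ => exp ((t - s) • A) :=
    (continuous_exp_smul A).comp (continuous_const.sub continuous_id)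
  exact (hexp.mul continuous_const).mul hexp.matrix_transpose

end LinftyOp

theorem vanLoan_Qd_general {n m : ℕ} (A : Matrix (Fin n) (Fin n) ℝ)
    (L : Matrix (Fin n) (Fin m) ℝ) (Q : Matrix (Fin m) (Fin m) ℝ) (Δt : ℝ) :
    ∃ Υ₁₂ Υ₂₂ : Matrix (Fin n) (Fin n) ℝ,
      NormedSpace.exp (Δt • Matrix.fromBlocks A (L * Q * Lᵀ) 0 (-Aᵀ)) =
        Matrix.fromBlocks (NormedSpace.exp (Δt • A)) Υ₁₂ 0 Υ₂₂ ∧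
      Υ₁₂ * (NormedSpace.exp (Δt • A))ᵀ =
        fun i j => ∫ s in (0:ℝ)..Δt,
          (NormedSpace.exp ((Δt - s) • A) * (L * Q * Lᵀ) *
            (NormedSpace.exp ((Δt - s) • A))ᵀ) i j :=
  ⟨_, _, Matrix.exp_smul_fromBlocks_zero₂₁ A (L * Q * Lᵀ) (-Aᵀ) Δt,
    Matrix.exp_smul_mul_intervalIntegral_mul_exp_smul_transpose A (L * Q * Lᵀ) Δt⟩

/-- Van Loan's method for `Q^d`: with `Ξ = [[A, LQLᵀ], [0, −Aᵀ]]`, the exponential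
`exp(Ξ Δt)` has block form `[[Υ₁₁, Υ₁₂], [0, Υ₂₂]]` with `Υ₁₁ = exp(A Δt)` and
`Υ₁₂ Υ₁₁ᵀ = ∫₀^{Δt} exp(A(Δt−s)) L Q Lᵀ (exp(A(Δt−s)))ᵀ ds`. -/
theorem vanLoan_Qd {n m : ℕ} (A : Matrix (Fin n) (Fin n) ℝ)
    (L : Matrix (Fin n) (Fin m) ℝ) (Q : Matrix (Fin m) (Fin m) ℝ) (Δt : ℝ) (hΔt : 0 ≤ Δt) :
    ∃ Υ₁₂ Υ₂₂ : Matrix (Fin n) (Fin n) ℝ,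
      NormedSpace.exp (Δt • Matrix.fromBlocks A (L * Q * Lᵀ) 0 (-Aᵀ)) =
        Matrix.fromBlocks (NormedSpace.exp (Δt • A)) Υ₁₂ 0 Υ₂₂ ∧
      Υ₁₂ * (NormedSpace.exp (Δt • A))ᵀ =
        fun i j => ∫ s in (0:ℝ)..Δt,
          (NormedSpace.exp ((Δt - s) • A) * (L * Q * Lᵀ) *
            (NormedSpace.exp ((Δt - s) • A))ᵀ) i j :=
  vanLoan_Qd_general A L Q Δt
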